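/- arXiv:1705.08511 — 6 statements merged into one kernel-verified Lean document; each statement's English description precedes it below -/
import Mathlib

section
/- Let 0 < b < 1, c ≥ 0, and suppose (2a + b)(1 − c²/(a+b)²) < 4 and (a−c)√2 > b+2 (with a+b ≠ 0). Then 2a + b < 2(1 + √(1 + c²)). -/
theorem stmt_4 (a b c : ℝ) (hb : 0 < b) (hb1 : b < 1) (hc : 0 ≤ c) (hab : a + b ≠ 0)
    (hA2 : (2 * a + b) * (1 - c ^ 2 / (a + b) ^ 2) < 4)
    (hA3 : (a - c) * Real.sqrt 2 > b + 2) :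
    2 * a + b < 2 * (1 + Real.sqrt (1 + c ^ 2)) := by
  set t := Real.sqrt (1 + c ^ 2) with ht
  have ht2 : t ^ 2 = 1 + c ^ 2 := Real.sq_sqrt (by positivity)
  have ht1 : 1 ≤ t := by
    nlinarith [Real.sqrt_nonneg (1 + c ^ 2)]
  by_contra h
  push_neg at h
  have hab2 : 1 + t < a + b := by linarith
  have hpos : (0:ℝ) < 1 + t := by linarith
  have key : c ^ 2 / (a + b) ^ 2 ≤ c ^ 2 / (1 + t) ^ 2 := by
    apply div_le_div_of_nonneg_left (by positivity) (by positivity)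
    nlinarith
  have heq : c ^ 2 / (1 + t) ^ 2 = (t - 1) / (t + 1) := by
    rw [div_eq_div_iff (by positivity) (by positivity)]
    nlinarith
  rw [heq] at key
  have hr : (t - 1) / (t + 1) * (t + 1) = t - 1 := by
    field_simp
  have hs : (0:ℝ) < 2 * a + b := by linarith
  have h4 : (2 * a + b) * (1 - (t - 1) / (t + 1)) < 4 := by
    have : (2 * a + b) * (1 - (t - 1) / (t + 1)) ≤ (2 * a + b) * (1 - c ^ 2 / (a + b) ^ 2) := by
      apply mul_le_mul_of_nonneg_left (by linarith) (by linarith)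
    linarith
  nlinarith [mul_lt_mul_of_pos_right h4 hpos, hr]
end

section
/- Let 0 < b < 1, c ≥ 0, (2a + b)(1 − c²/(a+b)²) < 4, and (a−c)√2 > b+2. Then c < min{a − b − 1, 1} and a > b + 1. -/
set_option maxHeartbeats 1600000 in
theorem stmt_5 (a b c : ℝ) (hb : 0 < b) (hb1 : b < 1) (hc : 0 ≤ c)
    (hA2 : (2 * a + b) * (1 - c ^ 2 / (a + b) ^ 2) < 4)
    (hA3 : (a - c) * Real.sqrt 2 > b + 2) :
    c < min (a - b - 1) 1 ∧ a > b + 1 := by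
  have hs2 : Real.sqrt 2 ^ 2 = 2 := Real.sq_sqrt (by norm_num)
  have hs2pos : (1:ℝ) < Real.sqrt 2 := by nlinarith [Real.sqrt_nonneg 2]
  have hs2lt : Real.sqrt 2 < 1.5 := by nlinarith [Real.sqrt_nonneg 2]
  -- a - c > b + 1
  have h1 : a - c > b + 1 := by nlinarith
  -- a - c > √2
  have h2 : a - c > Real.sqrt 2 := by nlinarith
  have hspos : 0 < a + b := by nlinarith
  have hmul : (2 * a + b) * ((a + b) ^ 2 - c ^ 2) < 4 * (a + b) ^ 2 := by
    have h := mul_lt_mul_of_pos_right hA2 (pow_pos hspos 2)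
    have : (1 - c ^ 2 / (a + b) ^ 2) * (a + b) ^ 2 = (a + b) ^ 2 - c ^ 2 := by
      field_simp
    nlinarith [this]
  set t := Real.sqrt (1 + c ^ 2) with ht
  have ht2 : t ^ 2 = 1 + c ^ 2 := Real.sq_sqrt (by positivity)
  have ht1 : 1 ≤ t := by nlinarith [Real.sqrt_nonneg (1 + c ^ 2)]
  have hx : 2 * a + b < 2 + 2 * t := by
    by_contra h
    push_neg at h
    have hx4 : (4:ℝ) ≤ 2 * a + b := by linarith
    have hxb : 2 * (a + b) = (2 * a + b) + b := by ring
    have step1 : (2 * a + b - 4) * (2 * a + b + b) ^ 2 < 4 * (2 * a + b) * c ^ 2 := by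
      nlinarith [hmul]
    have hsq : (2 * a + b) ^ 2 ≤ (2 * a + b + b) ^ 2 := by nlinarith
    have step2 : (2 * a + b - 4) * (2 * a + b) ^ 2 < 4 * (2 * a + b) * c ^ 2 := by
      have := mul_le_mul_of_nonneg_left hsq (by linarith : (0:ℝ) ≤ 2 * a + b - 4)
      linarith [step1]
    have hxpos : (0:ℝ) < 2 * a + b := by linarith
    have h' : (2 * a + b) * ((2 * a + b) * (2 * a + b - 4)) < (2 * a + b) * (4 * c ^ 2) := by
      linear_combination step2
    have key : (2 * a + b) * (2 * a + b - 4) < 4 * c ^ 2 :=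
      lt_of_mul_lt_mul_left h' (le_of_lt hxpos)
    have hlow : (2 + 2 * t) * (2 * t - 2) ≤ (2 * a + b) * (2 * a + b - 4) :=
      mul_le_mul h (by linarith) (by linarith) (by linarith)
    nlinarith [key, hlow, ht2]
  have hct : c + Real.sqrt 2 - 1 < t := by nlinarith
  have htpos : 0 < t := by linarith
  have hctn : 0 ≤ c + Real.sqrt 2 - 1 := by linarith
  have hsq : (c + Real.sqrt 2 - 1) * (c + Real.sqrt 2 - 1) < t * t :=
    mul_lt_mul' (le_of_lt hct) hct hctn htpos
  have hc1 : c < 1 := by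
    by_contra hcon
    push_neg at hcon
    have hmm := mul_le_mul_of_nonneg_right hcon (by linarith : (0:ℝ) ≤ Real.sqrt 2 - 1)
    nlinarith [hsq, hs2, hmm, ht2]
  refine ⟨lt_min (by linarith) hc1, by linarith⟩
end

section
/- Let 0 < b < 1, c ≥ 0, (2a + b)(1 − c²/(a+b)²) < 4, and (a−c)√2 > b+2. Then b ≤ min{ (a−c)(2a² + 3a + (2a+1)c)/(4(a+1)²), 1/2 }. -/
set_option maxHeartbeats 1000000 in
private lemma aux_c2 (a b c : ℝ) (hb : 0 < b) (hc : 0 ≤ c)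
    (hac : 0 < a - c) (hsq : 2 * (a - c)^2 > (b + 2)^2)
    (hA2' : (2*a+b) * ((a+b)^2 - c^2) < 4 * (a+b)^2)
    (hcc : 2 ≤ c) : False := by
  nlinarith [hsq, hA2', sq_nonneg (a-c-b-2), sq_nonneg (a+b-c),
    mul_nonneg (le_of_lt hac) hc,
    mul_nonneg (mul_nonneg (le_of_lt hac) (le_of_lt hac)) hc,
    mul_nonneg (le_of_lt hb) (by linarith : (0:ℝ) ≤ c - 2),
    mul_nonneg (le_of_lt hac) (by linarith : (0:ℝ) ≤ c - 2),
    mul_nonneg (mul_nonneg (le_of_lt hac) (le_of_lt hac)) (by linarith : (0:ℝ) ≤ c - 2)]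

set_option maxHeartbeats 1000000 in
private lemma aux_b2 (a b c : ℝ) (hb : 0 < b) (hb1 : b < 1) (hc : 0 ≤ c)
    (hac : 0 < a - c) (hsq : 2 * (a - c)^2 > (b + 2)^2)
    (hA2' : (2*a+b) * ((a+b)^2 - c^2) < 4 * (a+b)^2)
    (hc2 : c < 2) (hbb : 1/2 < b) : False := by
  nlinarith [hsq, hA2', sq_nonneg (a-c-b-2), mul_nonneg (le_of_lt hac) hc,
    mul_nonneg (mul_nonneg (le_of_lt hac) (le_of_lt hac)) hc,
    mul_nonneg (le_of_lt hb) hc, mul_pos hb hac, mul_nonneg hc hc,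
    mul_nonneg (mul_nonneg hc hc) (le_of_lt hac), sq_nonneg (a - c - 2)]

set_option maxHeartbeats 1000000 in
private lemma aux_main (a b c : ℝ) (hb : 0 < b) (hc : 0 ≤ c)
    (hac : 0 < a - c) (hsq : 2 * (a - c)^2 > (b + 2)^2)
    (hc2 : c < 2) (hb2 : b ≤ 1/2) (ha1 : a > 7/5) :
    b * (4 * (a + 1) ^ 2) ≤ (a - c) * (2 * a ^ 2 + 3 * a + (2 * a + 1) * c) := by
  have key1 : 16*(a-c)*(2*a^2+3*a+(2*a+1)*c) - 4*(a+1)^2*(7*a-3*c^2-2*c-2) ≥ 0 := by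
    nlinarith [sq_nonneg (a-1), sq_nonneg (a-c), mul_nonneg (le_of_lt hac) hc,
      mul_nonneg (mul_nonneg hc hc) (by linarith : (0:ℝ) ≤ a-1),
      mul_nonneg hc (by linarith : (0:ℝ) ≤ a-1),
      mul_nonneg (mul_nonneg (le_of_lt hac) (le_of_lt hac)) (by linarith : (0:ℝ) ≤ a-1),
      sq_nonneg (a-c-1), mul_nonneg (le_of_lt hac) (by linarith : (0:ℝ) ≤ a-1)]
  have key2 : 7*a - 3*c^2 - 2*c - 2 - 16*b ≥ 0 := by
    nlinarith [hsq, mul_nonneg hc (by linarith : (0:ℝ) ≤ 2 - c), sq_nonneg (a - c - 2),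
      mul_nonneg (le_of_lt hb) (by linarith : (0:ℝ) ≤ 1/2 - b)]
  nlinarith [key1, key2, sq_nonneg (a+1)]

set_option maxHeartbeats 1000000 in
theorem stmt_7 (a b c : ℝ) (hb : 0 < b) (hb1 : b < 1) (hc : 0 ≤ c)
    (hA2 : (2 * a + b) * (1 - c ^ 2 / (a + b) ^ 2) < 4)
    (hA3 : (a - c) * Real.sqrt 2 > b + 2) :
    b ≤ min ((a - c) * (2 * a ^ 2 + 3 * a + (2 * a + 1) * c) / (4 * (a + 1) ^ 2))
      (1 / 2) := by
  have hs2 : Real.sqrt 2 ^ 2 = 2 := Real.sq_sqrt (by norm_num)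
  have hs0 : (0:ℝ) < Real.sqrt 2 := Real.sqrt_pos.mpr (by norm_num)
  have hs15 : Real.sqrt 2 < 15/10 := by nlinarith [hs2, hs0]
  have hac : 0 < a - c := by nlinarith [hA3, hs0, hs15]
  have hsq : 2 * (a - c)^2 > (b + 2)^2 := by nlinarith [hA3, hs2, hs0, hb]
  have ha1 : a > 7/5 := by nlinarith [hsq, hac, hc, hb]
  have hab : 0 < a + b := by linarith
  have habp : 0 < (a + b)^2 := by positivity
  have hA2' : (2*a+b) * ((a+b)^2 - c^2) < 4 * (a+b)^2 := by
    have h1 : (2*a+b) * (1 - c^2/(a+b)^2) = ((2*a+b) * ((a+b)^2 - c^2))/(a+b)^2 := by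
      field_simp
    rw [h1, div_lt_iff₀ habp] at hA2
    linarith
  have hc2 : c < 2 := by
    by_contra h
    push_neg at h
    exact aux_c2 a b c hb hc hac hsq hA2' h
  have hb2 : b ≤ 1/2 := by
    by_contra h
    push_neg at h
    exact aux_b2 a b c hb hb1 hc hac hsq hA2' hc2 h
  refine le_min ?_ hb2
  rw [le_div_iff₀ (by positivity)]
  exact aux_main a b c hb hc hac hsq hc2 hb2 ha1
end

section
/- Let 0 < b < 1, c ≥ 0, (2a + b)(1 − c²/(a+b)²) < 4, and (a−c)√2 > b+2. Then a³ − 4a + a²c − ac² − c³ − 4bc ≥ (−a² + 2b + c²)·√((a+c)² + 4b). -/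
theorem stmt_8 (a b c : ℝ) (hb : 0 < b) (hb1 : b < 1) (hc : 0 ≤ c)
    (hA2 : (2 * a + b) * (1 - c ^ 2 / (a + b) ^ 2) < 4)
    (hA3 : (a - c) * Real.sqrt 2 > b + 2) :
    a ^ 3 - 4 * a + a ^ 2 * c - a * c ^ 2 - c ^ 3 - 4 * b * c ≥
      (-a ^ 2 + 2 * b + c ^ 2) * Real.sqrt ((a + c) ^ 2 + 4 * b) := by
  have hr2 : Real.sqrt 2 ^ 2 = 2 := Real.sq_sqrt (by norm_num)
  have hr0 : (0:ℝ) < Real.sqrt 2 := Real.sqrt_pos.mpr (by norm_num)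
  have hr15 : Real.sqrt 2 ≤ 2 := by
    nlinarith [hr2, hr0]
  have hac : 0 < a - c := by nlinarith [hA3, hr0, hr15]
  have h2 : 2 * (a - c) ^ 2 > (b + 2) ^ 2 := by nlinarith [hA3, hr2, hr0, hac, mul_pos hac hr0]
  have hacp : 0 < a + c := by linarith
  have hSa : a + c ≤ Real.sqrt ((a + c) ^ 2 + 4 * b) := by
    have h := Real.sqrt_le_sqrt (show (a + c) ^ 2 ≤ (a + c) ^ 2 + 4 * b by linarith)
    rwa [Real.sqrt_sq hacp.le] at h
  have hsign : 0 < a ^ 2 - c ^ 2 - 2 * b := by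
    nlinarith [h2, mul_pos hac hacp, sq_nonneg (a - c), mul_nonneg hc hac.le]
  have hprod : 0 ≤ (a ^ 2 - c ^ 2 - 2 * b) * (Real.sqrt ((a + c) ^ 2 + 4 * b) - (a + c)) :=
    mul_nonneg hsign.le (by linarith)
  have hpoly : a ^ 3 - 4 * a + a ^ 2 * c - a * c ^ 2 - c ^ 3 - 4 * b * c ≥
      (-a ^ 2 + 2 * b + c ^ 2) * (a + c) := by
    nlinarith [mul_pos hac (sub_pos.mpr h2), mul_nonneg hc (sub_pos.mpr h2).le,
      mul_nonneg (mul_nonneg hc hc) hac.le, mul_nonneg (mul_nonneg hb.le hb.le) hac.le,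
      mul_nonneg hb.le hac.le, mul_nonneg (mul_nonneg hb.le hb.le) hc,
      mul_nonneg hb.le hc, hc]
  nlinarith [hprod, hpoly]
end

section
/- For all real a ≥ √2 and 0 ≤ c < 1, the inequality a³ + (c − √2)a² + (−c² − 2√2 c)a + (−c³ + 3√2 c² + 6c) ≥ 0 holds. -/
theorem stmt_16 (a c : ℝ) (ha : Real.sqrt 2 ≤ a) (hc0 : 0 ≤ c) (hc1 : c < 1) :
    a ^ 3 + (c - Real.sqrt 2) * a ^ 2 + (-c ^ 2 - 2 * Real.sqrt 2 * c) * a +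
      (-c ^ 3 + 3 * Real.sqrt 2 * c ^ 2 + 6 * c) ≥ 0 := by
  have hs : Real.sqrt 2 ^ 2 = 2 := Real.sq_sqrt (by norm_num)
  have hs1 : (1:ℝ) ≤ Real.sqrt 2 := by
    nlinarith [Real.sqrt_nonneg 2]
  nlinarith [sq_nonneg (a - Real.sqrt 2), mul_nonneg (sub_nonneg.2 ha) (sq_nonneg (a - Real.sqrt 2)),
    mul_nonneg hc0 (sub_nonneg.2 ha), mul_nonneg (mul_nonneg hc0 hc0) hc0,
    mul_nonneg hc0 (sq_nonneg (a - Real.sqrt 2)),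
    mul_nonneg (sub_nonneg.2 ha) (mul_nonneg hc0 hc0), Real.sqrt_nonneg 2]
end

section
/- Let 0 < b < 1 and suppose (2a+b)(1 − c²/(a+b)²) < 4, c ≥ 0, and (a−c)√2 > b+2. Define x₁ = (2 + a + c + √((a+c)² + 4b))/(2(1 + a − b + c)) and x₂ = (2 − 2b − (a+c)(a + c + √((a+c)² + 4b)))/(2(1 + a − b + c)), y₂ = b(2 + a + c + √((a+c)² + 4b))/(2(1 + a − b + c)). Then x₁ > 0, x₂ < 0, and y₂ > 0. -/
theorem stmt_17 (a b c : ℝ) (hb : 0 < b) (hb1 : b < 1) (hc : 0 ≤ c)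
    (hA2 : (2 * a + b) * (1 - c ^ 2 / (a + b) ^ 2) < 4)
    (hA3 : (a - c) * Real.sqrt 2 > b + 2)
    (x₁ x₂ y₂ : ℝ)
    (hx₁ : x₁ = (2 + a + c + Real.sqrt ((a + c) ^ 2 + 4 * b)) /
      (2 * (1 + a - b + c)))
    (hx₂ : x₂ = (2 - 2 * b - (a + c) * (a + c + Real.sqrt ((a + c) ^ 2 + 4 * b))) /
      (2 * (1 + a - b + c)))
    (hy₂ : y₂ = b * (2 + a + c + Real.sqrt ((a + c) ^ 2 + 4 * b)) /
      (2 * (1 + a - b + c))) :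
    x₁ > 0 ∧ x₂ < 0 ∧ y₂ > 0 := by
  have h2 : Real.sqrt 2 ^ 2 = 2 := Real.sq_sqrt (by norm_num)
  have hsn : (0:ℝ) ≤ Real.sqrt 2 := Real.sqrt_nonneg 2
  have hac : 0 < a - c := by
    by_contra h
    push_neg at h
    nlinarith [mul_nonpos_of_nonpos_of_nonneg h hsn]
  have hsq : 2 * (a - c) ^ 2 > (b + 2) ^ 2 := by
    nlinarith [sq_nonneg ((a - c) * Real.sqrt 2 - (b + 2))]
  have ha : a > b + 1 + c := by nlinarith
  have ha0 : 0 < a := by linarith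
  have hap : 0 < a + c := by linarith
  have hden : 0 < 2 * (1 + a - b + c) := by linarith
  have hS : 0 ≤ Real.sqrt ((a + c) ^ 2 + 4 * b) := Real.sqrt_nonneg _
  have hSge : a + c ≤ Real.sqrt ((a + c) ^ 2 + 4 * b) := by
    have h1 : (a + c) ^ 2 ≤ (a + c) ^ 2 + 4 * b := by linarith
    calc a + c = Real.sqrt ((a + c) ^ 2) := (Real.sqrt_sq hap.le).symm
      _ ≤ Real.sqrt ((a + c) ^ 2 + 4 * b) := Real.sqrt_le_sqrt h1
  refine ⟨?_, ?_, ?_⟩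
  · rw [hx₁]
    apply div_pos (by linarith) hden
  · rw [hx₂]
    apply div_neg_of_neg_of_pos _ hden
    nlinarith [mul_le_mul_of_nonneg_left hSge hap.le, mul_nonneg ha0.le hc]
  · rw [hy₂]
    apply div_pos (by nlinarith) hden
end
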